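/- arXiv:1909.06105 — 2 statements merged into one kernel-verified Lean document; each statement's English description precedes it below -/
import Mathlib

section
/- If P is a set of points in general position in the plane with exactly two interior points (|I(P)| = 2), then P admits a convex decomposition with exactly 4 polygons, so u(P) ≤ 4 ≤ (4/3)·2 + (1/3)|B(P)| + 1. -/
/-- Points of the plane. -/
abbrev Pt := ℝ × ℝ

/-- A finite point set is in general position if no three of its points are collinear. -/
def GenPos (P : Finset Pt) : Prop :=
  ∀ p ∈ P, ∀ q ∈ P, ∀ r ∈ P, p ≠ q → q ≠ r → p ≠ r → ¬ Collinear ℝ ({p, q, r} : Set Pt)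

open Classical in
/-- The vertices of the convex hull of `P`. -/
noncomputable def hullB (P : Finset Pt) : Finset Pt :=
  P.filter (fun p => p ∉ convexHull ℝ ((P : Set Pt) \ {p}))

open Classical in
/-- The interior points of `P` (the points that are not hull vertices). -/
noncomputable def intI (P : Finset Pt) : Finset Pt := P \ hullB P

/-- A closed convex polygon with vertices in `P`. -/
def IsPolygonOn (P : Finset Pt) (C : Set Pt) : Prop :=
  ∃ V : Finset Pt, V ⊆ P ∧ 3 ≤ V.card ∧ C = convexHull ℝ (V : Set Pt)

/-- A convex decomposition of a region `R` with respect to `P`: closed convex polygons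
with vertices in `P`, pairwise disjoint interiors, union `R`, and no point of `P`
in the interior of any polygon. -/
def IsConvexDecompOfRegion (P : Finset Pt) (R : Set Pt) (D : Finset (Set Pt)) : Prop :=
  (∀ C ∈ D, IsPolygonOn P C) ∧
  (∀ C ∈ D, ∀ C' ∈ D, C ≠ C' → interior C ∩ interior C' = ∅) ∧
  (⋃ C ∈ D, C) = R ∧
  (∀ C ∈ D, ∀ p ∈ P, (p : Pt) ∉ interior C)

/-- A convex decomposition of the point set `P`. -/
def IsConvexDecomp (P : Finset Pt) (D : Finset (Set Pt)) : Prop :=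
  IsConvexDecompOfRegion P (convexHull ℝ (P : Set Pt)) D

/-- `uMin P` is the minimum number of polygons in a convex decomposition of `P`. -/
noncomputable def uMin (P : Finset Pt) : ℕ :=
  sInf {n | ∃ D : Finset (Set Pt), IsConvexDecomp P D ∧ D.card = n}

/-- `p` and `q` are the endpoints of an edge of the convex hull of `P`. -/
def IsHullEdge (P : Finset Pt) (p q : Pt) : Prop :=
  p ∈ hullB P ∧ q ∈ hullB P ∧ p ≠ q ∧
    segment ℝ p q ⊆ frontier (convexHull ℝ (P : Set Pt))

/-- `H` is the open half-plane with `q` and `q'` on its boundary containing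
no point of `I` (the outer half-plane of the edge `q q'` of `CH(I)`). -/
def IsOuterHalf (I : Finset Pt) (q q' : Pt) (H : Set Pt) : Prop :=
  ∃ f : Pt →ₗ[ℝ] ℝ, f ≠ 0 ∧ f q = f q' ∧ H = {x | f q < f x} ∧ ∀ r ∈ I, f r ≤ f q

/-- The angular domain at `a` bounded by the rays from `a` through `b` and through `c`,
containing the segment `b c`. -/
def angDom (a b c : Pt) : Set Pt :=
  {x | ∃ s t : ℝ, 0 ≤ s ∧ 0 ≤ t ∧ x = a + s • (b - a) + t • (c - a)}

/-- Every triangle of three consecutive hull vertices of `P` contains a point of `P`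
in its interior. -/
def TripleFilled (P : Finset Pt) : Prop :=
  ∀ a p c : Pt, IsHullEdge P a p → IsHullEdge P p c → a ≠ c →
    (interior (convexHull ℝ ({a, p, c} : Set Pt)) ∩ (P : Set Pt)).Nonempty

/-- Every outer open half-plane of a hull edge of `I(P)` contains exactly one
hull vertex of `P`. -/
def OuterOne (P : Finset Pt) : Prop :=
  ∀ q q' H, IsHullEdge (intI P) q q' → IsOuterHalf (intI P) q q' H →
    ((hullB P : Set Pt) ∩ H).ncard = 1

/-!
Let `u, v` be the two interior points. The ray from `u` away from `v` leaves `conv P` through the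
relative interior of a hull edge `ab` (general position keeps it off the hull vertices), and the
ray from `v` away from `u` leaves through an edge `cd`. The four polygons are the triangles `uab`
and `vcd` and, on each side of the line `uv`, the convex hull of `u`, `v` and the points of `P`
strictly on that side. On one side of `uv` the lines `ua` and `vc` cut `conv P` into a part of
`uab`, a part of `vcd` and a middle region cut out by three half-planes; the extreme points of
that region are points of `P` or lie on the segments `uv`, `ua`, `vc`, so by Krein–Milman it is
the claimed convex hull. Each pair of pieces is separated by one of these lines, except `uab` and
`vcd`, which are separated on each side of `uv` separately.
-/

open Set

noncomputable def wedge : Pt →ₗ[ℝ] Pt →ₗ[ℝ] ℝ :=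
  LinearMap.mk₂ ℝ (fun d z => d.1 * z.2 - d.2 * z.1) (by intros; simp; ring) (by intros; simp; ring)
    (by intros; simp; ring) (by intros; simp; ring)

@[simp]
lemma wedge_apply (d z : Pt) : wedge d z = d.1 * z.2 - d.2 * z.1 := rfl

@[simp]
lemma wedge_self (d : Pt) : wedge d d = 0 := by simp; ring

lemma eq_smul_add_smul_of_wedge_ne_zero {d₁ d₂ : Pt} (h : wedge d₁ d₂ ≠ 0) (w : Pt) :
    w = (wedge w d₂ / wedge d₁ d₂) • d₁ + (wedge d₁ w / wedge d₁ d₂) • d₂ := by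
  have key : wedge d₁ d₂ • w = wedge w d₂ • d₁ + wedge d₁ w • d₂ := by
    ext <;> simp <;> ring
  rw [div_eq_inv_mul, div_eq_inv_mul, mul_smul, mul_smul, ← smul_add, ← key, smul_smul,
    inv_mul_cancel₀ h, one_smul]

lemma exists_eq_smul_of_wedge_eq_zero {d w : Pt} (hd : d ≠ 0) (h : wedge d w = 0) :
    ∃ c : ℝ, w = c • d := by
  have hperp : wedge d (-d.2, d.1) ≠ 0 := by
    have : d.1 ≠ 0 ∨ d.2 ≠ 0 := by
      by_contra! h0
      exact hd (Prod.ext h0.1 h0.2)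
    simp only [wedge_apply]
    rcases this with h0 | h0 <;> nlinarith [sq_pos_of_ne_zero h0, sq_nonneg d.1, sq_nonneg d.2]
  have hw := eq_smul_add_smul_of_wedge_ne_zero hperp w
  rw [h, zero_div, zero_smul, add_zero] at hw
  exact ⟨_, hw⟩

lemma exists_eq_smul_of_apply_eq_zero {G : Pt →ₗ[ℝ] ℝ} (hG : G ≠ 0) {d w : Pt} (hd : d ≠ 0)
    (hGd : G d = 0) (hGw : G w = 0) : ∃ c : ℝ, w = c • d := by
  refine exists_eq_smul_of_wedge_eq_zero hd (by_contra fun hdw => hG (LinearMap.ext fun y => ?_))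
  rw [eq_smul_add_smul_of_wedge_ne_zero hdw y]
  simp [hGd, hGw]

lemma collinear_of_wedge_eq_zero {p q r : Pt} (hpq : p ≠ q)
    (h : wedge (q - p) (r - p) = 0) : Collinear ℝ ({p, q, r} : Set Pt) := by
  obtain ⟨c, hc⟩ := exists_eq_smul_of_wedge_eq_zero (sub_ne_zero.2 hpq.symm) h
  rw [collinear_iff_of_mem (p₀ := p) (by simp)]
  refine ⟨q - p, ?_⟩
  rintro x (rfl | rfl | rfl)
  · exact ⟨0, by simp⟩
  · exact ⟨1, by simp⟩
  · exact ⟨c, by rw [← hc, vadd_eq_add, sub_add_cancel]⟩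

lemma GenPos.wedge_ne_zero {P : Finset Pt} (hgp : GenPos P) {p q r : Pt} (hp : p ∈ P)
    (hq : q ∈ P) (hr : r ∈ P) (hpq : p ≠ q) (hqr : q ≠ r) (hpr : p ≠ r) :
    wedge (q - p) (r - p) ≠ 0 :=
  fun h => hgp p hp q hq r hr hpq hqr hpr (collinear_of_wedge_eq_zero hpq h)

lemma mem_convexHull_triple_iff {p q r z : Pt} :
    z ∈ convexHull ℝ ({p, q, r} : Set Pt) ↔
      ∃ α β : ℝ, 0 ≤ α ∧ 0 ≤ β ∧ α + β ≤ 1 ∧ z = p + α • (q - p) + β • (r - p) := by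
  constructor
  · rw [convexHull_insert (insert_nonempty q {r}), convexHull_pair, mem_convexJoin]
    rintro ⟨_, rfl, w, ⟨τ₁, τ₂, hτ₁, hτ₂, hτ, rfl⟩, θ₁, θ₂, hθ₁, hθ₂, hθ, rfl⟩
    refine ⟨θ₂ * τ₁, θ₂ * τ₂, by positivity, by positivity, by nlinarith, ?_⟩
    rw [show θ₁ = 1 - θ₂ by linarith, show τ₂ = 1 - τ₁ by linarith]
    module
  · rintro ⟨α, β, hα, hβ, hαβ, rfl⟩
    have h := (convex_convexHull ℝ ({p, q, r} : Set Pt)).sum_mem (t := Finset.univ)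
      (w := ![1 - α - β, α, β]) (z := ![p, q, r])
      (by intro i _; fin_cases i <;> simp <;> linarith) (by simp [Fin.sum_univ_three]; ring)
      (by intro i _; fin_cases i <;> exact subset_convexHull ℝ _ (by simp))
    convert h using 1
    simp [Fin.sum_univ_three]
    module

lemma mem_convexHull_triple_of_halfPlanes {p q r z : Pt} {f g k : Pt →ₗ[ℝ] ℝ}
    (hfq : f q = f p) (hfr : f p < f r) (hgr : g r = g p) (hgq : g p < g q)
    (hkr : k r = k q) (hkp : k p < k q) (hf : f p ≤ f z) (hg : g p ≤ g z) (hk : k z ≤ k q) :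
    z ∈ convexHull ℝ ({p, q, r} : Set Pt) := by
  have hD : wedge (q - p) (r - p) ≠ 0 := by
    intro h0
    have hqp : q - p ≠ 0 := fun h => by rw [sub_eq_zero.1 h] at hgq; exact lt_irrefl _ hgq
    obtain ⟨c, hc⟩ := exists_eq_smul_of_wedge_eq_zero hqp h0
    have := congrArg f hc
    simp only [map_sub, map_smul, hfq, sub_self, smul_zero] at this
    linarith
  set α := wedge (z - p) (r - p) / wedge (q - p) (r - p)
  set β := wedge (q - p) (z - p) / wedge (q - p) (r - p)
  have hz : z - p = α • (q - p) + β • (r - p) := eq_smul_add_smul_of_wedge_ne_zero hD _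
  have hfz := congrArg f hz
  have hgz := congrArg g hz
  have hkz := congrArg k hz
  simp only [map_sub, map_add, map_smul, smul_eq_mul, hfq, hgr, hkr] at hfz hgz hkz
  have hβ : 0 ≤ β := by nlinarith
  have hα : 0 ≤ α := by nlinarith
  refine mem_convexHull_triple_iff.2 ⟨α, β, hα, hβ, by nlinarith, ?_⟩
  rw [add_assoc, ← hz, add_sub_cancel]

lemma mem_interior_convexHull_triple {p q r : Pt} (hD : wedge (q - p) (r - p) ≠ 0) {α β : ℝ}
    (hα : 0 < α) (hβ : 0 < β) (hαβ : α + β < 1) :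
    p + α • (q - p) + β • (r - p) ∈ interior (convexHull ℝ ({p, q, r} : Set Pt)) := by
  set A : Pt → ℝ := fun w => wedge (w - p) (r - p) / wedge (q - p) (r - p)
  set B : Pt → ℝ := fun w => wedge (q - p) (w - p) / wedge (q - p) (r - p)
  have hA : Continuous A := by simp only [A, wedge_apply]; fun_prop
  have hB : Continuous B := by simp only [B, wedge_apply]; fun_prop
  have hz : p + α • (q - p) + β • (r - p) - p = α • (q - p) + β • (r - p) := by abel
  refine mem_interior.2 ⟨{w | 0 < A w ∧ 0 < B w ∧ A w + B w < 1}, fun w hw => ?_,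
    (isOpen_lt continuous_const hA).inter ((isOpen_lt continuous_const hB).inter
      (isOpen_lt (hA.add hB) continuous_const)), ?_⟩
  · refine mem_convexHull_triple_iff.2 ⟨A w, B w, hw.1.le, hw.2.1.le, hw.2.2.le, ?_⟩
    rw [add_assoc, ← eq_smul_add_smul_of_wedge_ne_zero hD, add_sub_cancel]
  · simp only [A, B, Set.mem_ofPred_eq, hz, map_add, map_smul, LinearMap.add_apply,
      LinearMap.smul_apply, smul_eq_mul, wedge_self, mul_zero, add_zero, zero_add]
    simp only [mul_div_assoc, div_self hD, mul_one]
    exact ⟨hα, hβ, hαβ⟩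

lemma interior_convexHull_triple_nonempty {p q r : Pt} (hD : wedge (q - p) (r - p) ≠ 0) :
    (interior (convexHull ℝ ({p, q, r} : Set Pt))).Nonempty :=
  ⟨_, mem_interior_convexHull_triple hD (α := 1 / 3) (β := 1 / 3) (by norm_num) (by norm_num)
    (by norm_num)⟩

section HalfPlane

variable {E : Type*} [NormedAddCommGroup E] [NormedSpace ℝ E]
  {f : E →ₗ[ℝ] ℝ} {s t : Set E} {c : ℝ} {z : E}

lemma apply_lt_of_mem_interior (hf : f ≠ 0) (hs : s ⊆ {z | f z ≤ c}) (hz : z ∈ interior s) :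
    f z < c := by
  have hopen := f.isOpenMap_of_finiteDimensional (LinearMap.surjective_of_ne_zero hf)
  have : f z ∈ interior (Iic c) :=
    interior_mono (image_subset_iff.2 hs) (hopen.image_interior_subset s ⟨z, hz, rfl⟩)
  rwa [interior_Iic] at this

lemma lt_apply_of_mem_interior (hf : f ≠ 0) (hs : s ⊆ {z | c ≤ f z}) (hz : z ∈ interior s) :
    c < f z := by
  have := apply_lt_of_mem_interior (f := -f) (c := -c) (neg_ne_zero.2 hf)
    (fun y hy => by simpa using hs hy) hz
  simpa using this

lemma interior_inter_interior_eq_empty_of_halfPlanes (hf : f ≠ 0) (hs : s ⊆ {z | f z ≤ c})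
    (ht : t ⊆ {z | c ≤ f z}) : interior s ∩ interior t = ∅ :=
  eq_empty_iff_forall_notMem.2 fun _ hz =>
    (apply_lt_of_mem_interior hf hs hz.1).not_gt (lt_apply_of_mem_interior hf ht hz.2)

end HalfPlane

lemma ne_of_interior_inter_eq_empty {X : Type*} [TopologicalSpace X] {s t : Set X}
    (h : interior s ∩ interior t = ∅) (hs : (interior s).Nonempty) : s ≠ t := by
  rintro rfl
  rw [inter_self] at h
  exact hs.ne_empty h

section Boundary

variable {E : Type*} [NormedAddCommGroup E] [NormedSpace ℝ E] {K : Set E} {o : E}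

lemma exists_pos_add_smul_mem_sdiff_interior (hK : IsCompact K) (ho : o ∈ interior K) {d : E}
    (hd : d ≠ 0) : ∃ t : ℝ, 0 < t ∧ o + t • d ∈ K ∧ o + t • d ∉ interior K := by
  have hray : Continuous fun t : ℝ => o + t • d := by fun_prop
  have hemb : Topology.IsClosedEmbedding fun t : ℝ => o + t • d :=
    (Homeomorph.addLeft o).isClosedEmbedding.comp (isClosedEmbedding_smul_left hd)
  obtain ⟨T, ⟨hTK, hT0⟩, hTmax⟩ := ((hemb.isCompact_preimage hK).inter_right isClosed_Ici
    |>.exists_isGreatest ⟨0, by simpa using interior_subset ho, self_mem_Ici⟩)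
  have hnear : ∀ t₀, o + t₀ • d ∈ interior K → ∃ t > t₀, o + t • d ∈ K := fun t₀ ht₀ =>
    have h : ∀ᶠ t in nhds t₀, o + t • d ∈ interior K :=
      (hray.tendsto t₀).eventually (isOpen_interior.mem_nhds ht₀)
    let ⟨t, htK, ht⟩ :=
      ((h.filter_mono nhdsWithin_le_nhds).and (self_mem_nhdsWithin (s := Ioi t₀))).exists
    ⟨t, ht, interior_subset htK⟩
  obtain ⟨ε, hε, hεK⟩ := hnear 0 (by simpa using ho)
  refine ⟨T, hε.trans_le (hTmax ⟨hεK, hε.le⟩), hTK, fun hT => ?_⟩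
  obtain ⟨t, ht, htK⟩ := hnear T hT
  exact (hTmax ⟨htK, hT0.trans ht.le⟩).not_gt ht

lemma exists_supporting_functional (hK : Convex ℝ K) (ho : o ∈ interior K) {x : E}
    (hx : x ∉ interior K) :
    ∃ h : E →ₗ[ℝ] ℝ, (∀ z ∈ K, h z ≤ h x) ∧ h o < h x := by
  obtain ⟨f, c, hf, hfK, hfx⟩ := geometric_hahn_banach_of_nonempty_interior hK
    (convex_singleton x) (disjoint_singleton_right.2 hx) ⟨o, ho⟩ (singleton_nonempty x)
  have hf' : (f : E →ₗ[ℝ] ℝ) ≠ 0 := fun h => hf (ContinuousLinearMap.coe_injective h)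
  exact ⟨f, fun z hz => (hfK z hz).trans (hfx x rfl),
    (apply_lt_of_mem_interior hf' hfK ho).trans_le (hfx x rfl)⟩

end Boundary

section ExtremePoints

variable {E : Type*} [NormedAddCommGroup E] [NormedSpace ℝ E]

lemma eq_convexHull_of_extremePoints_subset {R V : Set E} (hR : IsCompact R) (hRc : Convex ℝ R)
    (hV : V.Finite) (hVR : V ⊆ R) (hext : R.extremePoints ℝ ⊆ convexHull ℝ V) :
    R = convexHull ℝ V := by
  refine subset_antisymm ?_ (convexHull_min hVR hRc)
  calc R = closure (convexHull ℝ (R.extremePoints ℝ)) :=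
        (closure_convexHull_extremePoints hR hRc).symm
    _ ⊆ closure (convexHull ℝ V) := closure_mono (convexHull_min hext (convex_convexHull ℝ V))
    _ = convexHull ℝ V := (hV.isClosed_convexHull (𝕜 := ℝ)).closure_eq

lemma eq_or_mem_extremePoints_of_mem_extremePoints_inter {K : Set E} (hK : Convex ℝ K)
    {f : E →ₗ[ℝ] ℝ} {c : ℝ} {z : E} (hz : z ∈ (K ∩ {w | f w ≤ c}).extremePoints ℝ) :
    f z = c ∨ z ∈ K.extremePoints ℝ := by
  obtain ⟨⟨hzK, hzc⟩, hext⟩ := mem_extremePoints.1 hz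
  refine hzc.eq_or_lt.imp id fun hlt => mem_extremePoints.2 ⟨hzK, fun x₁ hx₁ x₂ hx₂ hseg => ?_⟩
  have hsmall : ∀ x : E, ∀ᶠ ε in nhds (0 : ℝ), f z + ε * (f x - f z) < c := fun x =>
    ((continuous_const.add (continuous_id.mul continuous_const)).tendsto 0).eventually
      (gt_mem_nhds (by simpa using hlt))
  obtain ⟨ε, ⟨⟨hε₁, hε₂⟩, hε1⟩, hε0⟩ := ((((hsmall x₁).and (hsmall x₂)).and
    (gt_mem_nhds one_pos)).filter_mono nhdsWithin_le_nhds |>.and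
      (self_mem_nhdsWithin (s := Ioi 0))).exists
  have hshrink : ∀ x ∈ K, f z + ε * (f x - f z) < c → z + ε • (x - z) ∈ K ∩ {w | f w ≤ c} := by
    intro x hx hfx
    refine ⟨?_, by simpa [mul_sub] using hfx.le⟩
    convert hK hzK hx (sub_nonneg.2 hε1.le) (le_of_lt hε0) (by ring) using 1
    module
  obtain ⟨a, b, ha, hb, hab, hz⟩ := hseg
  have hmid : z ∈ openSegment ℝ (z + ε • (x₁ - z)) (z + ε • (x₂ - z)) := by
    refine ⟨a, b, ha, hb, hab, ?_⟩
    calc a • (z + ε • (x₁ - z)) + b • (z + ε • (x₂ - z))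
        = (a + b) • z + ε • (a • x₁ + b • x₂ - (a + b) • z) := by module
      _ = z := by rw [hab, hz, one_smul, sub_self, smul_zero, add_zero]
  have hcancel : ∀ x, z + ε • (x - z) = z → x = z := fun x h => by
    simpa [sub_eq_zero, hε0.ne'] using h
  exact ⟨hcancel _ (hext _ (hshrink x₁ hx₁ hε₁) _ (hshrink x₂ hx₂ hε₂) hmid).1,
    hcancel _ (hext _ (hshrink x₁ hx₁ hε₁) _ (hshrink x₂ hx₂ hε₂) hmid).2⟩

end ExtremePoints

lemma mem_hullB_iff {P : Finset Pt} {p : Pt} :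
    p ∈ hullB P ↔ p ∈ P ∧ p ∉ convexHull ℝ ((P : Set Pt) \ {p}) := by
  classical
  simp [hullB]

lemma notMem_convexHull_of_mem_hullB {P : Finset Pt} {b o : Pt} (hb : b ∈ hullB P)
    (ho : o ∈ convexHull ℝ ((P : Set Pt) \ {b})) {r : ℝ} (hr : 1 < r) :
    o + r • (b - o) ∉ convexHull ℝ (P : Set Pt) := by
  intro hy
  obtain ⟨hbP, hbC⟩ := mem_hullB_iff.1 hb
  rw [← insert_eq_of_mem (Finset.mem_coe.2 hbP), ← insert_sdiff_singleton,
    convexHull_insert (convexHull_nonempty_iff.1 ⟨o, ho⟩), mem_convexJoin] at hy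
  obtain ⟨b', hb', w, hw, μ₁, μ₂, hμ₁, hμ₂, hμ, hyw⟩ := hy
  rw [mem_singleton_iff.1 hb'] at hyw
  apply hbC
  have hrμ : 0 < r - μ₁ := by linarith
  have hb : b = (μ₂ / (r - μ₁)) • w + ((r - 1) / (r - μ₁)) • o := by
    have h1 : (r - μ₁) • b = μ₂ • w + (r - 1) • o := by
      rw [eq_sub_of_add_eq' hyw]; module
    rw [div_eq_inv_mul, div_eq_inv_mul, mul_smul, mul_smul, ← smul_add, ← h1, smul_smul,
      inv_mul_cancel₀ hrμ.ne', one_smul]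
  have hmem := convex_convexHull ℝ _ hw ho (div_nonneg hμ₂ hrμ.le)
    (div_nonneg (sub_nonneg.2 hr.le) hrμ.le)
    (by rw [← add_div, div_eq_one_iff_eq hrμ.ne']; linarith)
  rwa [← hb] at hmem

lemma hullB_nonempty {P : Finset Pt} (hP : P.Nonempty) : (hullB P).Nonempty := by
  obtain ⟨z, hz⟩ := (P.finite_toSet.isCompact_convexHull ℝ).extremePoints_nonempty
    (convexHull_nonempty_iff.2 hP.to_set)
  have hzP : z ∈ P := extremePoints_convexHull_subset hz
  rw [(convex_convexHull ℝ _).mem_extremePoints_iff_mem_sdiff_convexHull_sdiff] at hz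
  exact ⟨z, mem_hullB_iff.2 ⟨hzP, fun h =>
    hz.2 (convexHull_mono (sdiff_subset_sdiff_left (subset_convexHull ℝ _)) h)⟩⟩

lemma notMem_interior_convexHull_of_mem_hullB {P : Finset Pt} {q : Pt} (hq : q ∈ hullB P) :
    q ∉ interior (convexHull ℝ (P : Set Pt)) := by
  intro hint
  obtain ⟨o, hoP, hoq⟩ : ∃ o ∈ P, o ≠ q := by
    by_contra! h
    have hsub : convexHull ℝ (P : Set Pt) ⊆ {q} :=
      convexHull_min (fun o ho => h o ho) (convex_singleton q)
    simpa using interior_mono hsub hint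
  have hline : Continuous fun r : ℝ => o + r • (q - o) := by fun_prop
  have hnear : ∀ᶠ r in nhdsWithin (1 : ℝ) (Ioi 1),
      o + r • (q - o) ∈ convexHull ℝ (P : Set Pt) := by
    apply nhdsWithin_le_nhds
    refine (hline.tendsto 1).eventually (Filter.mem_of_superset ?_ interior_subset)
    simpa using isOpen_interior.mem_nhds hint
  obtain ⟨r, hrK, hr1⟩ := (hnear.and self_mem_nhdsWithin).exists
  exact notMem_convexHull_of_mem_hullB hq
    (subset_convexHull ℝ _ ⟨hoP, hoq⟩) hr1 hrK

lemma mem_or_mem_openSegment_of_mem_segment {S : Set Pt} {p q z : Pt} (hp : p ∈ S) (hq : q ∈ S)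
    (hz : z ∈ segment ℝ p q) :
    z ∈ S ∨ ∃ p ∈ S, ∃ q ∈ S, p ≠ q ∧ z ∈ openSegment ℝ p q := by
  rcases eq_or_ne p q with rfl | hpq
  · rw [segment_same, mem_singleton_iff] at hz
    exact .inl (hz ▸ hp)
  rw [← insert_endpoints_openSegment] at hz
  rcases hz with rfl | rfl | hz
  exacts [.inl hp, .inl hq, .inr ⟨p, hp, q, hq, hpq, hz⟩]

lemma GenPos.mem_or_mem_openSegment_or_mem_interior_of_mem_triangle {P : Finset Pt}
    (hgp : GenPos P) {S : Set Pt} (hS : S ⊆ P) {p q r z : Pt} (hp : p ∈ S) (hq : q ∈ S)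
    (hr : r ∈ S) (hpq : p ≠ q) (hqr : q ≠ r) (hpr : p ≠ r)
    (hz : z ∈ convexHull ℝ ({p, q, r} : Set Pt)) :
    z ∈ S ∨ (∃ p ∈ S, ∃ q ∈ S, p ≠ q ∧ z ∈ openSegment ℝ p q) ∨
      z ∈ interior (convexHull ℝ S) := by
  obtain ⟨α, β, hα, hβ, hαβ, hz⟩ := mem_convexHull_triple_iff.1 hz
  have edge : ∀ {x y : Pt}, x ∈ S → y ∈ S → ∀ θ ∈ Icc (0 : ℝ) 1, z = x + θ • (y - x) →
      z ∈ S ∨ (∃ p ∈ S, ∃ q ∈ S, p ≠ q ∧ z ∈ openSegment ℝ p q) ∨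
        z ∈ interior (convexHull ℝ S) := by
    intro x y hx hy θ hθ h
    have hseg : z ∈ segment ℝ x y := by rw [segment_eq_image']; exact ⟨θ, hθ, h.symm⟩
    exact (mem_or_mem_openSegment_of_mem_segment hx hy hseg).imp_right .inl
  rcases hα.eq_or_lt with rfl | hα
  · exact edge hp hr β ⟨hβ, by linarith⟩ (by rw [hz]; module)
  rcases hβ.eq_or_lt with rfl | hβ
  · exact edge hp hq α ⟨hα.le, by linarith⟩ (by rw [hz]; module)
  rcases hαβ.eq_or_lt with hαβ | hαβ
  · exact edge hq hr β ⟨hβ.le, by linarith⟩ (by rw [hz, show α = 1 - β by linarith]; module)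
  refine .inr (.inr (interior_mono (convexHull_mono ?_) (hz ▸
    (mem_interior_convexHull_triple (hgp.wedge_ne_zero (hS hp) (hS hq) (hS hr) hpq hqr hpr)
      hα hβ hαβ))))
  rintro x (rfl | rfl | rfl) <;> assumption

lemma GenPos.mem_or_mem_openSegment_or_mem_interior {P : Finset Pt} (hgp : GenPos P)
    {S : Set Pt} (hS : S ⊆ P) {z : Pt} (hz : z ∈ convexHull ℝ S) :
    z ∈ S ∨ (∃ p ∈ S, ∃ q ∈ S, p ≠ q ∧ z ∈ openSegment ℝ p q) ∨
      z ∈ interior (convexHull ℝ S) := by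
  rw [convexHull_eq_union] at hz
  simp only [mem_iUnion, exists_prop] at hz
  obtain ⟨t, hts, hti, hzt⟩ := hz
  have hcard : t.card ≤ 3 := by
    have := hti.card_le_finrank_succ
    rw [Fintype.card_coe] at this
    have h2 : Module.finrank ℝ Pt = 2 := by simp
    have := this.trans (Nat.add_le_add_right (Submodule.finrank_le (vectorSpan ℝ _)) 1)
    omega
  interval_cases hc : t.card
  · simp [Finset.card_eq_zero.1 hc] at hzt
  · obtain ⟨p, rfl⟩ := Finset.card_eq_one.1 hc
    simp only [Finset.coe_singleton, convexHull_singleton, mem_singleton_iff] at hzt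
    exact .inl (hzt ▸ hts (by simp))
  · obtain ⟨p, q, -, rfl⟩ := Finset.card_eq_two.1 hc
    rw [Finset.coe_pair, convexHull_pair] at hzt
    exact (mem_or_mem_openSegment_of_mem_segment (hts (by simp)) (hts (by simp)) hzt).imp_right
      .inl
  · obtain ⟨p, q, r, hpq, hpr, hqr, rfl⟩ := Finset.card_eq_three.1 hc
    rw [Finset.coe_insert, Finset.coe_pair] at hzt
    exact hgp.mem_or_mem_openSegment_or_mem_interior_of_mem_triangle hS (hts (by simp))
      (hts (by simp)) (hts (by simp)) hpq hqr hpr hzt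

lemma GenPos.notMem_openSegment {P : Finset Pt} (hgp : GenPos P) {p q z : Pt} (hp : p ∈ P)
    (hq : q ∈ P) (hz : z ∈ P) (hpq : p ≠ q) (hzp : z ≠ p) (hzq : z ≠ q) :
    z ∉ openSegment ℝ p q := fun h =>
  hgp p hp z hz q hq hzp.symm hzq hpq
    (mem_segment_iff_wbtw.1 (openSegment_subset_segment ℝ p q h)).collinear

lemma mem_interior_convexHull_of_mem_intI {P : Finset Pt} (hgp : GenPos P) {u : Pt}
    (hu : u ∈ intI P) : u ∈ interior (convexHull ℝ (P : Set Pt)) := by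
  classical
  obtain ⟨huP, huB⟩ := Finset.mem_sdiff.1 hu
  have huC : u ∈ convexHull ℝ ((P : Set Pt) \ {u}) := by
    by_contra h
    exact huB (mem_hullB_iff.2 ⟨huP, h⟩)
  rcases hgp.mem_or_mem_openSegment_or_mem_interior sdiff_subset huC with h | h | h
  · exact absurd rfl h.2
  · obtain ⟨p, hp, q, hq, hpq, hseg⟩ := h
    exact absurd hseg (hgp.notMem_openSegment hp.1 hq.1 huP hpq (Ne.symm hp.2) (Ne.symm hq.2))
  · exact interior_mono (convexHull_mono sdiff_subset) h

def IsEmptyPolygonOn (P : Finset Pt) (C : Set Pt) : Prop :=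
  IsPolygonOn P C ∧ (interior C).Nonempty ∧ ∀ p ∈ P, p ∉ interior C

lemma GenPos.isEmptyPolygonOn_convexHull {P V : Finset Pt} (hgp : GenPos P) (hVP : V ⊆ P)
    {p q r : Pt} (hp : p ∈ V) (hq : q ∈ V) (hr : r ∈ V) (hpq : p ≠ q) (hqr : q ≠ r) (hpr : p ≠ r)
    (hint : ∀ z ∈ P, z ∉ hullB P → z ∉ interior (convexHull ℝ (V : Set Pt))) :
    IsEmptyPolygonOn P (convexHull ℝ (V : Set Pt)) := by
  classical
  refine ⟨⟨V, hVP, ?_, rfl⟩, ?_, fun z hz hzint => ?_⟩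
  · calc 3 = ({p, q, r} : Finset Pt).card := by
          rw [Finset.card_insert_of_notMem (by simp [hpq, hpr]), Finset.card_pair hqr]
      _ ≤ V.card := Finset.card_le_card (by simp [Finset.insert_subset_iff, hp, hq, hr])
  · obtain ⟨z, hz⟩ := interior_convexHull_triple_nonempty
      (hgp.wedge_ne_zero (hVP hp) (hVP hq) (hVP hr) hpq hqr hpr)
    refine ⟨z, interior_mono (convexHull_mono ?_) hz⟩
    simp [insert_subset_iff, hp, hq, hr]
  · by_cases hzB : z ∈ hullB P
    · exact notMem_interior_convexHull_of_mem_hullB hzB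
        (interior_mono (convexHull_mono (Finset.coe_subset.2 hVP)) hzint)
    · exact hint z hz hzB hzint

lemma IsPolygonOn.subset_convexHull {P : Finset Pt} {C : Set Pt} (h : IsPolygonOn P C) :
    C ⊆ convexHull ℝ (P : Set Pt) := by
  obtain ⟨V, hVP, -, rfl⟩ := h
  exact convexHull_mono (Finset.coe_subset.2 hVP)

lemma exists_convexDecomp_of_emptyPolygons {P : Finset Pt} {C₁ C₂ C₃ C₄ : Set Pt}
    (h₁ : IsEmptyPolygonOn P C₁) (h₂ : IsEmptyPolygonOn P C₂) (h₃ : IsEmptyPolygonOn P C₃)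
    (h₄ : IsEmptyPolygonOn P C₄) (h₁₂ : interior C₁ ∩ interior C₂ = ∅)
    (h₁₃ : interior C₁ ∩ interior C₃ = ∅) (h₁₄ : interior C₁ ∩ interior C₄ = ∅)
    (h₂₃ : interior C₂ ∩ interior C₃ = ∅) (h₂₄ : interior C₂ ∩ interior C₄ = ∅)
    (h₃₄ : interior C₃ ∩ interior C₄ = ∅) (hcover : convexHull ℝ ↑P ⊆ C₁ ∪ C₂ ∪ C₃ ∪ C₄) :
    ∃ D : Finset (Set Pt), IsConvexDecomp P D ∧ D.card = 4 := by
  classical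
  have hne : ∀ {s t : Set Pt}, IsEmptyPolygonOn P s → interior s ∩ interior t = ∅ → s ≠ t :=
    fun hs h => ne_of_interior_inter_eq_empty h hs.2.1
  have hsymm : ∀ {s t : Set Pt}, interior s ∩ interior t = ∅ → interior t ∩ interior s = ∅ :=
    fun h => by rwa [inter_comm]
  have hmem : ∀ C ∈ ({C₁, C₂, C₃, C₄} : Finset (Set Pt)), IsEmptyPolygonOn P C := by
    simp only [Finset.mem_insert, Finset.mem_singleton]
    rintro C (rfl | rfl | rfl | rfl) <;> assumption
  refine ⟨{C₁, C₂, C₃, C₄}, ⟨fun C hC => (hmem C hC).1, ?_, ?_, fun C hC => (hmem C hC).2.2⟩, ?_⟩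
  · simp only [Finset.mem_insert, Finset.mem_singleton]
    rintro C (rfl | rfl | rfl | rfl) C' (rfl | rfl | rfl | rfl) hCC' <;>
      first | exact absurd rfl hCC' | assumption | exact hsymm ‹_›
  · refine subset_antisymm (iUnion₂_subset fun C hC => (hmem C hC).1.subset_convexHull) ?_
    intro z hz
    simp only [Finset.mem_insert, Finset.mem_singleton, mem_iUnion, exists_prop]
    rcases hcover hz with ((hz | hz) | hz) | hz
    exacts [⟨_, .inl rfl, hz⟩, ⟨_, .inr (.inl rfl), hz⟩, ⟨_, .inr (.inr (.inl rfl)), hz⟩,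
      ⟨_, .inr (.inr (.inr rfl)), hz⟩]
  · rw [Finset.card_insert_of_notMem (by simp [hne h₁ h₁₂, hne h₁ h₁₃, hne h₁ h₁₄]),
      Finset.card_insert_of_notMem (by simp [hne h₂ h₂₃, hne h₂ h₂₄]),
      Finset.card_pair (hne h₃ h₃₄)]

structure SplitLine (P : Finset Pt) (G : Pt →ₗ[ℝ] ℝ) (u v : Pt) : Prop where
  genPos : GenPos P
  u_mem_intI : u ∈ intI P
  v_mem_intI : v ∈ intI P
  ne : u ≠ v
  mem_hullB : ∀ p ∈ P, p ≠ u → p ≠ v → p ∈ hullB P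
  map_v : G v = G u
  map_ne : ∀ p ∈ P, p ≠ u → p ≠ v → G p ≠ G u

namespace SplitLine

variable {P : Finset Pt} {G : Pt →ₗ[ℝ] ℝ} {u v : Pt}

lemma u_mem (S : SplitLine P G u v) : u ∈ P := (Finset.mem_sdiff.1 S.u_mem_intI).1

lemma v_mem (S : SplitLine P G u v) : v ∈ P := (Finset.mem_sdiff.1 S.v_mem_intI).1

lemma symm (S : SplitLine P G u v) : SplitLine P G v u where
  genPos := S.genPos
  u_mem_intI := S.v_mem_intI
  v_mem_intI := S.u_mem_intI
  ne := S.ne.symm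
  mem_hullB p hp hpv hpu := S.mem_hullB p hp hpu hpv
  map_v := S.map_v.symm
  map_ne p hp hpv hpu := S.map_v ▸ S.map_ne p hp hpu hpv

lemma neg (S : SplitLine P G u v) : SplitLine P (-G) u v where
  genPos := S.genPos
  u_mem_intI := S.u_mem_intI
  v_mem_intI := S.v_mem_intI
  ne := S.ne
  mem_hullB := S.mem_hullB
  map_v := by simp [S.map_v]
  map_ne p hp hpu hpv := by simpa using S.map_ne p hp hpu hpv

lemma eq_or_eq_of_map_eq (S : SplitLine P G u v) {p : Pt} (hp : p ∈ P) (hGp : G p = G u) :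
    p = u ∨ p = v := by
  by_contra! h
  exact S.map_ne p hp h.1 h.2 hGp

lemma of_intI_eq (hgp : GenPos P) (huv : u ≠ v) (hI : intI P = {u, v}) :
    SplitLine P (wedge (v - u)) u v where
  genPos := hgp
  u_mem_intI := by simp [hI]
  v_mem_intI := by simp [hI]
  ne := huv
  mem_hullB p hp hpu hpv := by
    classical
    by_contra hpB
    have : p ∈ intI P := Finset.mem_sdiff.2 ⟨hp, hpB⟩
    simp [hI, hpu, hpv] at this
  map_v := by
    have := map_sub (wedge (v - u)) v u
    rw [wedge_self] at this
    linarith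
  map_ne p hp hpu hpv h := by
    have hu : u ∈ intI P := by simp [hI]
    have hv : v ∈ intI P := by simp [hI]
    exact hgp.wedge_ne_zero (Finset.mem_sdiff.1 hu).1 (Finset.mem_sdiff.1 hv).1 hp huv hpv.symm
      hpu.symm (by rw [map_sub (wedge (v - u)) p u, h, sub_self])

end SplitLine

/-- The ray from `o` away from `w` leaves `conv P` at `x`, an interior point of the hull edge `ab`
with `a` on the positive side of `G`; `h` supports `conv P` at `x`. -/
structure ExitEdge (P : Finset Pt) (G : Pt →ₗ[ℝ] ℝ) (o w : Pt) where
  split : SplitLine P G o w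
  a : Pt
  b : Pt
  x : Pt
  t : ℝ
  lam : ℝ
  h : Pt →ₗ[ℝ] ℝ
  a_mem : a ∈ P
  b_mem : b ∈ P
  x_eq_ray : x = o + t • (o - w)
  t_pos : 0 < t
  x_eq_comb : x = lam • a + (1 - lam) • b
  lam_pos : 0 < lam
  lam_lt_one : lam < 1
  map_a : G o < G a
  map_b : G b < G o
  h_le : ∀ z ∈ convexHull ℝ (P : Set Pt), h z ≤ h x
  h_lt : h o < h x

namespace ExitEdge

variable {P : Finset Pt} {G : Pt →ₗ[ℝ] ℝ} {o w : Pt} (e : ExitEdge P G o w)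

def neg : ExitEdge P (-G) o w where
  split := e.split.neg
  a := e.b
  b := e.a
  x := e.x
  t := e.t
  lam := 1 - e.lam
  h := e.h
  a_mem := e.b_mem
  b_mem := e.a_mem
  x_eq_ray := e.x_eq_ray
  t_pos := e.t_pos
  x_eq_comb := by rw [e.x_eq_comb, sub_sub_cancel, add_comm]
  lam_pos := sub_pos.2 e.lam_lt_one
  lam_lt_one := sub_lt_self 1 e.lam_pos
  map_a := by simpa using e.map_b
  map_b := by simpa using e.map_a
  h_le := e.h_le
  h_lt := e.h_lt

def triangle : Set Pt := convexHull ℝ {o, e.a, e.b}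

lemma neg_triangle : e.neg.triangle = e.triangle := by
  simp only [triangle, neg, Set.pair_comm]

lemma map_x : G e.x = G o := by
  simp [e.x_eq_ray, e.split.map_v]

lemma a_ne_o : e.a ≠ o := fun h => (h ▸ e.map_a).false

lemma b_ne_o : e.b ≠ o := fun h => (h ▸ e.map_b).false

lemma a_ne_w : e.a ≠ w := fun h => by simpa [h, e.split.map_v] using e.map_a

lemma map_ne_zero (e : ExitEdge P G o w) : G ≠ 0 := fun h => by simpa [h] using e.map_a

lemma a_ne_b : e.a ≠ e.b := fun h => (e.map_b.trans (h ▸ e.map_a)).false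

lemma a_mem_hullB : e.a ∈ hullB P := e.split.mem_hullB _ e.a_mem e.a_ne_o e.a_ne_w

lemma wedge_ne_zero : wedge (e.a - o) (e.x - o) ≠ 0 := by
  intro h0
  obtain ⟨c, hc⟩ := exists_eq_smul_of_wedge_eq_zero (sub_ne_zero.2 e.a_ne_o) h0
  have hGc := congrArg G hc
  simp only [map_sub, map_smul, e.map_x, sub_self, smul_eq_mul, zero_eq_mul] at hGc
  rcases hGc with rfl | hGa
  · rw [zero_smul, e.x_eq_ray, add_sub_cancel_left, smul_eq_zero, sub_eq_zero] at hc
    exact hc.elim e.t_pos.ne' e.split.ne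
  · exact e.map_a.ne' (sub_eq_zero.1 hGa)

/-- The level line `cut = cut o` is the line `oa`; it separates the triangle `oab` from the middle
polygon on the side `G ≥ G o`. -/
noncomputable def cut : Pt →ₗ[ℝ] ℝ := (wedge (e.a - o) (e.x - o))⁻¹ • wedge (e.a - o)

lemma cut_sub (z : Pt) :
    e.cut z - e.cut o = wedge (e.a - o) (z - o) / wedge (e.a - o) (e.x - o) := by
  simp only [cut, LinearMap.smul_apply, smul_eq_mul, map_sub (wedge (e.a - o)) z o]
  ring

lemma cut_a : e.cut e.a = e.cut o := by
  have := e.cut_sub e.a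
  rwa [wedge_self, zero_div, sub_eq_zero] at this

lemma cut_x : e.cut e.x = e.cut o + 1 := by
  have := e.cut_sub e.x
  rw [div_self e.wedge_ne_zero] at this
  linarith

lemma cut_b : e.cut o < e.cut e.b := by
  have hx : e.x - o = e.lam • (e.a - o) + (1 - e.lam) • (e.b - o) := by
    rw [e.x_eq_comb]; module
  have := congrArg e.cut hx
  simp only [map_sub, map_add, map_smul, smul_eq_mul, e.cut_x, e.cut_a] at this
  nlinarith [e.lam_lt_one]

lemma cut_w : e.cut w < e.cut o := by
  have := congrArg e.cut e.x_eq_ray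
  simp only [map_add, map_sub, map_smul, smul_eq_mul, e.cut_x] at this
  nlinarith [e.t_pos]

lemma cut_ne_zero : e.cut ≠ 0 := fun h => by simpa [h] using e.cut_x

lemma h_a_and_h_b : e.h e.a = e.h e.x ∧ e.h e.b = e.h e.x := by
  have ha := e.h_le _ (subset_convexHull ℝ _ e.a_mem)
  have hb := e.h_le _ (subset_convexHull ℝ _ e.b_mem)
  have := congrArg e.h e.x_eq_comb
  simp only [map_add, map_smul, smul_eq_mul] at this
  constructor <;> nlinarith [e.lam_pos, e.lam_lt_one]

lemma mem_convexHull_oax {z : Pt} (hG : G o ≤ G z) (hcut : e.cut o ≤ e.cut z)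
    (hh : e.h z ≤ e.h e.x) : z ∈ convexHull ℝ {o, e.a, e.x} :=
  mem_convexHull_triple_of_halfPlanes e.cut_a (by linarith [e.cut_x]) e.map_x e.map_a
    e.h_a_and_h_b.1.symm (e.h_a_and_h_b.1 ▸ e.h_lt) hcut hG (e.h_a_and_h_b.1 ▸ hh)

lemma convexHull_oax_subset_triangle : convexHull ℝ {o, e.a, e.x} ⊆ e.triangle := by
  refine convexHull_min ?_ (convex_convexHull ℝ _)
  rintro z (rfl | rfl | rfl)
  · exact subset_convexHull ℝ _ (by simp)
  · exact subset_convexHull ℝ _ (by simp)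
  · rw [e.x_eq_comb]
    exact convex_convexHull ℝ _ (subset_convexHull ℝ _ (by simp))
      (subset_convexHull ℝ _ (by simp)) e.lam_pos.le (sub_nonneg.2 e.lam_lt_one.le) (by ring)

lemma triangle_subset_convexHull : e.triangle ⊆ convexHull ℝ (P : Set Pt) := by
  refine convexHull_mono ?_
  rintro z (rfl | rfl | rfl)
  exacts [e.split.u_mem, e.a_mem, e.b_mem]

lemma triangle_subset_cut : e.triangle ⊆ {z | e.cut o ≤ e.cut z} := by
  refine convexHull_min ?_ (convex_halfSpace_ge e.cut.isLinear _)
  simp only [insert_subset_iff, singleton_subset_iff, Set.mem_ofPred_eq]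
  exact ⟨le_rfl, e.cut_a.ge, e.cut_b.le⟩

lemma mem_triangle {z : Pt} (hz : z ∈ convexHull ℝ (P : Set Pt)) (hG : G o ≤ G z)
    (hcut : e.cut o ≤ e.cut z) : z ∈ e.triangle :=
  e.convexHull_oax_subset_triangle (e.mem_convexHull_oax hG hcut (e.h_le z hz))

lemma mem_convexHull_oax_of_mem_triangle {z : Pt} (hz : z ∈ e.triangle) (hG : G o ≤ G z) :
    z ∈ convexHull ℝ {o, e.a, e.x} :=
  e.mem_convexHull_oax hG (e.triangle_subset_cut hz) (e.h_le z (e.triangle_subset_convexHull hz))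

lemma cut_lt {p : Pt} (hp : p ∈ P) (hpo : p ≠ o) (hpw : p ≠ w) (hpa : p ≠ e.a)
    (hG : G o ≤ G p) : e.cut p < e.cut o := by
  rcases lt_trichotomy (e.cut p) (e.cut o) with h | h | h
  · exact h
  · have := e.cut_sub p
    rw [h, sub_self, eq_comm, div_eq_zero_iff] at this
    exact (this.resolve_right e.wedge_ne_zero |> e.split.genPos.wedge_ne_zero e.split.u_mem
      e.a_mem hp e.a_ne_o.symm hpa.symm hpo.symm).elim
  · have hpB := e.split.mem_hullB p hp hpo hpw
    refine ((mem_hullB_iff.1 hpB).2 (convexHull_mono ?_ (e.mem_triangle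
      (subset_convexHull ℝ _ hp) hG h.le))).elim
    have hpb : p ≠ e.b := fun hpb => (hpb ▸ hG).not_gt e.map_b
    rintro z (rfl | rfl | rfl)
    exacts [⟨e.split.u_mem, hpo.symm⟩, ⟨e.a_mem, hpa.symm⟩, ⟨e.b_mem, hpb.symm⟩]

lemma mem_segment_of_cut_eq {z : Pt} (hz : z ∈ convexHull ℝ (P : Set Pt))
    (hcut : e.cut z = e.cut o) (hG : G o ≤ G z) : z ∈ segment ℝ o e.a := by
  have hw : wedge (e.a - o) (z - o) = 0 := by
    have := e.cut_sub z
    rwa [hcut, sub_self, eq_comm, div_eq_zero_iff, or_iff_left e.wedge_ne_zero] at this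
  obtain ⟨c, hc⟩ := exists_eq_smul_of_wedge_eq_zero (sub_ne_zero.2 e.a_ne_o) hw
  have hc0 : 0 ≤ c := by
    have := congrArg G hc
    simp only [map_sub, map_smul, smul_eq_mul] at this
    nlinarith [e.map_a]
  have hc1 : c ≤ 1 := by
    by_contra! hc1
    refine notMem_convexHull_of_mem_hullB e.a_mem_hullB
      (subset_convexHull ℝ _ ⟨e.split.u_mem, e.a_ne_o.symm⟩) hc1 ?_
    rwa [← hc, add_sub_cancel]
  rw [segment_eq_image']
  exact ⟨c, ⟨hc0, hc1⟩, by simp only [← hc, add_sub_cancel]⟩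

lemma isEmptyPolygonOn_triangle : IsEmptyPolygonOn P e.triangle := by
  have hV : e.triangle = convexHull ℝ ((({o, e.a, e.b} : Finset Pt)) : Set Pt) := by
    simp [triangle]
  rw [hV]
  refine e.split.genPos.isEmptyPolygonOn_convexHull
    (by simp [Finset.insert_subset_iff, e.split.u_mem, e.a_mem, e.b_mem])
    (by simp) (by simp) (by simp)
    e.a_ne_o.symm e.a_ne_b e.b_ne_o.symm fun z hz hzB hzint => ?_
  have hcut := lt_apply_of_mem_interior e.cut_ne_zero (hV ▸ e.triangle_subset_cut) hzint
  by_cases hzo : z = o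
  · rw [hzo] at hcut
    exact lt_irrefl _ hcut
  · have hzw : z = w := by_contra fun hzw => hzB (e.split.mem_hullB z hz hzo hzw)
    rw [hzw] at hcut
    exact hcut.not_gt e.cut_w

end ExitEdge

lemma add_smul_sub_notMem_segment {E : Type*} [AddCommGroup E] [Module ℝ E] {o w : E}
    (hne : o ≠ w) {t : ℝ} (ht : 0 < t) : o + t • (o - w) ∉ segment ℝ o w := by
  rw [segment_eq_image']
  rintro ⟨s, ⟨hs, -⟩, hs'⟩
  have h0 : (t + s) • (o - w) = 0 :=
    calc (t + s) • (o - w) = o + t • (o - w) - (o + s • (w - o)) := by module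
      _ = 0 := by rw [← hs', sub_self]
  exact (smul_eq_zero.1 h0).elim (fun h => by linarith) (sub_ne_zero.2 hne)

lemma SplitLine.nonempty_exitEdge {P : Finset Pt} {G : Pt →ₗ[ℝ] ℝ} {o w : Pt}
    (S : SplitLine P G o w) : Nonempty (ExitEdge P G o w) := by
  have ho := mem_interior_convexHull_of_mem_intI S.genPos S.u_mem_intI
  obtain ⟨t, ht, hxK, hxint⟩ := exists_pos_add_smul_mem_sdiff_interior
    (P.finite_toSet.isCompact_convexHull ℝ) ho (sub_ne_zero.2 S.ne)
  obtain ⟨h, hh, hho⟩ := exists_supporting_functional (convex_convexHull ℝ _) ho hxint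
  generalize hx : o + t • (o - w) = x at hxK hxint hh hho
  have hGx : G x = G o := by simp [← hx, S.map_v]
  have hx_seg : x ∉ segment ℝ o w := hx ▸ add_smul_sub_notMem_segment S.ne ht
  have hline : ∀ p ∈ P, G p = G o → p ∈ segment ℝ o w := fun p hp hGp =>
    (S.eq_or_eq_of_map_eq hp hGp).elim (· ▸ left_mem_segment ℝ o w)
      (· ▸ right_mem_segment ℝ o w)
  rcases S.genPos.mem_or_mem_openSegment_or_mem_interior subset_rfl hxK with hxP | hseg | hint
  · exact (hx_seg (hline x hxP hGx)).elim
  · obtain ⟨p, hp, q, hq, -, hxpq⟩ := hseg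
    obtain ⟨α, β, hα, hβ, hαβ, hxe⟩ := id hxpq
    have hG := congrArg G hxe
    simp only [map_add, map_smul, smul_eq_mul, hGx] at hG
    have hsigns : β * (G q - G o) = α * (G o - G p) := by linear_combination hG - G o * hαβ
    rcases lt_trichotomy (G p) (G o) with hGp | hGp | hGp
    · refine ⟨⟨S, q, p, x, t, β, h, hq, hp, hx.symm, ht, ?_, hβ, by linarith, ?_, hGp, hh, hho⟩⟩
      · rw [← hxe, show 1 - β = α by linarith, add_comm]
      · nlinarith
    · have hGq : G q = G o := by
        rw [hGp, sub_self, mul_zero, mul_eq_zero, sub_eq_zero] at hsigns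
        exact hsigns.resolve_left hβ.ne'
      exact (hx_seg ((convex_segment o w).segment_subset (hline p hp hGp) (hline q hq hGq)
        (openSegment_subset_segment ℝ p q hxpq))).elim
    · refine ⟨⟨S, p, q, x, t, α, h, hp, hq, hx.symm, ht, ?_, hα, by linarith, hGp, ?_, hh, hho⟩⟩
      · rw [← hxe, show 1 - α = β by linarith]
      · nlinarith
  · exact (hxint hint).elim

open Classical in
noncomputable def sideVertices (P : Finset Pt) (G : Pt →ₗ[ℝ] ℝ) (u v : Pt) : Finset Pt :=
  insert u (insert v (P.filter fun p => G u < G p))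

lemma mem_sideVertices {P : Finset Pt} {G : Pt →ₗ[ℝ] ℝ} {u v p : Pt} :
    p ∈ sideVertices P G u v ↔ p = u ∨ p = v ∨ p ∈ P ∧ G u < G p := by
  classical
  simp [sideVertices]

noncomputable def sidePolygon (P : Finset Pt) (G : Pt →ₗ[ℝ] ℝ) (u v : Pt) : Set Pt :=
  convexHull ℝ ↑(sideVertices P G u v)

lemma SplitLine.sideVertices_subset {P : Finset Pt} {G : Pt →ₗ[ℝ] ℝ} {u v : Pt}
    (S : SplitLine P G u v) : sideVertices P G u v ⊆ P := by
  intro p hp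
  rcases mem_sideVertices.1 hp with rfl | rfl | hp
  exacts [S.u_mem, S.v_mem, hp.1]

lemma ExitEdge.a_mem_sideVertices {P : Finset Pt} {G : Pt →ₗ[ℝ] ℝ} {u v : Pt}
    (e : ExitEdge P G u v) : e.a ∈ sideVertices P G u v :=
  mem_sideVertices.2 (.inr (.inr ⟨e.a_mem, e.map_a⟩))

lemma SplitLine.sidePolygon_subset {P : Finset Pt} {G : Pt →ₗ[ℝ] ℝ} {u v : Pt}
    (S : SplitLine P G u v) : sidePolygon P G u v ⊆ {z | G u ≤ G z} := by
  refine convexHull_min (fun p hp => ?_) (convex_halfSpace_ge G.isLinear _)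
  rcases mem_sideVertices.1 hp with rfl | rfl | ⟨-, hGp⟩
  exacts [le_refl (G p), S.map_v.ge, hGp.le]

lemma ExitEdge.isEmptyPolygonOn_sidePolygon {P : Finset Pt} {G : Pt →ₗ[ℝ] ℝ} {u v : Pt}
    (e : ExitEdge P G u v) : IsEmptyPolygonOn P (sidePolygon P G u v) := by
  refine e.split.genPos.isEmptyPolygonOn_convexHull e.split.sideVertices_subset
    (mem_sideVertices.2 (.inl rfl)) (mem_sideVertices.2 (.inr (.inl rfl))) e.a_mem_sideVertices
    e.split.ne e.a_ne_w.symm e.a_ne_o.symm fun z hz hzB hzint => ?_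
  have hGz := lt_apply_of_mem_interior e.map_ne_zero e.split.sidePolygon_subset hzint
  have hzuv : z = u ∨ z = v := by
    by_contra! h
    exact hzB (e.split.mem_hullB z hz h.1 h.2)
  rcases hzuv with rfl | rfl
  exacts [hGz.false, (e.split.map_v ▸ hGz).false]

lemma SplitLine.sideVertices_comm {P : Finset Pt} {G : Pt →ₗ[ℝ] ℝ} {u v : Pt}
    (S : SplitLine P G u v) : sideVertices P G v u = sideVertices P G u v := by
  ext p
  simp only [mem_sideVertices, S.map_v]
  tauto

lemma ExitEdge.cut_le_of_mem_sideVertices {P : Finset Pt} {G : Pt →ₗ[ℝ] ℝ} {o w : Pt}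
    (e : ExitEdge P G o w) {p : Pt} (hp : p ∈ sideVertices P G o w) : e.cut p ≤ e.cut o := by
  rcases mem_sideVertices.1 hp with rfl | rfl | ⟨hp, hGp⟩
  · exact le_rfl
  · exact e.cut_w.le
  rcases eq_or_ne p e.a with rfl | hpa
  · exact e.cut_a.le
  refine (e.cut_lt hp (fun h => (h ▸ hGp).false) (fun h => ?_) hpa hGp.le).le
  exact (e.split.map_v ▸ h ▸ hGp).false

lemma ExitEdge.sidePolygon_subset_cut {P : Finset Pt} {G : Pt →ₗ[ℝ] ℝ} {o w : Pt}
    (e : ExitEdge P G o w) : sidePolygon P G o w ⊆ {z | e.cut z ≤ e.cut o} :=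
  convexHull_min (fun _ hp => e.cut_le_of_mem_sideVertices hp)
    (convex_halfSpace_le e.cut.isLinear _)

lemma ExitEdge.interior_triangle_inter_interior_sidePolygon {P : Finset Pt} {G : Pt →ₗ[ℝ] ℝ}
    {o w : Pt} (e : ExitEdge P G o w) :
    interior e.triangle ∩ interior (sidePolygon P G o w) = ∅ := by
  rw [inter_comm]
  exact interior_inter_interior_eq_empty_of_halfPlanes e.cut_ne_zero e.sidePolygon_subset_cut
    e.triangle_subset_cut

section Side

variable {P : Finset Pt} {G : Pt →ₗ[ℝ] ℝ} {u v : Pt} (e : ExitEdge P G u v) (f : ExitEdge P G v u)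
include e f

lemma mem_segment_of_map_eq {z : Pt} (hG : G z = G u) (he : e.cut z ≤ e.cut u)
    (hf : f.cut z ≤ f.cut v) : z ∈ segment ℝ u v := by
  obtain ⟨c, hc⟩ := exists_eq_smul_of_apply_eq_zero (w := z - u) e.map_ne_zero
    (sub_ne_zero.2 e.split.ne.symm) (by rw [map_sub, e.split.map_v, sub_self])
    (by rw [map_sub, hG, sub_self])
  have hec := congrArg e.cut hc
  have hfc := congrArg f.cut hc
  simp only [map_sub, map_smul, smul_eq_mul] at hec hfc
  have := e.cut_w
  have := f.cut_w
  rw [segment_eq_image']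
  exact ⟨c, ⟨by nlinarith, by nlinarith⟩, by simp only [← hc, add_sub_cancel]⟩

lemma inter_halfPlanes_eq_convexHull_sideVertices :
    convexHull ℝ ↑P ∩ {z | (-G) z ≤ (-G) u} ∩ {z | e.cut z ≤ e.cut u} ∩ {z | f.cut z ≤ f.cut v}
      = sidePolygon P G u v := by
  have hhalf : ∀ (g : Pt →ₗ[ℝ] ℝ) (c : ℝ), IsClosed {z | g z ≤ c} ∧ Convex ℝ {z | g z ≤ c} :=
    fun g c => ⟨isClosed_le g.continuous_of_finiteDimensional continuous_const,
      convex_halfSpace_le g.isLinear c⟩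
  have hK := convex_convexHull ℝ (P : Set Pt)
  have hG : ∀ {z}, z ∈ {z | (-G) z ≤ (-G) u} ↔ G u ≤ G z := by simp
  have hfa : f.a ∈ sideVertices P G u v :=
    mem_sideVertices.2 (.inr (.inr ⟨f.a_mem, e.split.map_v ▸ f.map_a⟩))
  have hu : u ∈ sideVertices P G u v := mem_sideVertices.2 (.inl rfl)
  have hv : v ∈ sideVertices P G u v := mem_sideVertices.2 (.inr (.inl rfl))
  refine eq_convexHull_of_extremePoints_subset ((((P.finite_toSet.isCompact_convexHull ℝ
    ).inter_right (hhalf _ _).1).inter_right (hhalf _ _).1).inter_right (hhalf _ _).1)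
    (((hK.inter (hhalf _ _).2).inter (hhalf _ _).2).inter (hhalf _ _).2) (Finset.finite_toSet _)
    (fun p hp => ?_) (fun z hz => ?_)
  · refine ⟨⟨⟨subset_convexHull ℝ _ (e.split.sideVertices_subset hp),
      hG.2 (e.split.sidePolygon_subset (subset_convexHull ℝ _ hp))⟩,
      e.cut_le_of_mem_sideVertices hp⟩, f.cut_le_of_mem_sideVertices ?_⟩
    rwa [e.split.sideVertices_comm]
  obtain ⟨⟨⟨hzK, hzG⟩, hze⟩, hzf⟩ := extremePoints_subset hz
  rw [hG] at hzG
  rcases eq_or_mem_extremePoints_of_mem_extremePoints_inter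
    ((hK.inter (hhalf _ _).2).inter (hhalf _ _).2) hz with hf | hz
  · exact segment_subset_convexHull hv hfa
      (f.mem_segment_of_cut_eq hzK hf (e.split.map_v ▸ hzG))
  rcases eq_or_mem_extremePoints_of_mem_extremePoints_inter (hK.inter (hhalf _ _).2) hz
    with he | hz
  · exact segment_subset_convexHull hu e.a_mem_sideVertices
      (e.mem_segment_of_cut_eq hzK he hzG)
  rcases eq_or_mem_extremePoints_of_mem_extremePoints_inter hK hz with hGz | hz
  · exact segment_subset_convexHull hu hv
      (mem_segment_of_map_eq e f (by simpa using hGz) hze hzf)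
  have hzP : z ∈ P := extremePoints_convexHull_subset hz
  refine subset_convexHull ℝ _ (mem_sideVertices.2 ?_)
  by_cases hzu : z = u
  · exact .inl hzu
  by_cases hzv : z = v
  · exact .inr (.inl hzv)
  exact .inr (.inr ⟨hzP, hzG.lt_of_ne (e.split.map_ne z hzP hzu hzv).symm⟩)

lemma mem_triangle_or_mem_triangle_or_mem_sidePolygon {z : Pt}
    (hz : z ∈ convexHull ℝ (P : Set Pt)) (hG : G u ≤ G z) :
    z ∈ e.triangle ∨ z ∈ f.triangle ∨ z ∈ sidePolygon P G u v := by
  by_cases he : e.cut u ≤ e.cut z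
  · exact .inl (e.mem_triangle hz hG he)
  by_cases hf : f.cut v ≤ f.cut z
  · exact .inr (.inl (f.mem_triangle hz (e.split.map_v ▸ hG) hf))
  rw [← inter_halfPlanes_eq_convexHull_sideVertices e f]
  exact .inr (.inr ⟨⟨⟨hz, by simpa using hG⟩, (not_le.1 he).le⟩, (not_le.1 hf).le⟩)

lemma false_of_mem_interior_triangle_of_mem_triangle {z : Pt} (hze : z ∈ interior e.triangle)
    (hzf : z ∈ f.triangle) (hG : G u ≤ G z) : False := by
  have hsub : convexHull ℝ {v, f.a, f.x} ⊆ {z | e.cut z ≤ e.cut u} := by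
    refine convexHull_min ?_ (convex_halfSpace_le e.cut.isLinear _)
    have hfx := congrArg e.cut f.x_eq_ray
    simp only [map_add, map_smul, map_sub, smul_eq_mul] at hfx
    have := e.cut_w
    simp only [insert_subset_iff, singleton_subset_iff, Set.mem_ofPred_eq]
    refine ⟨this.le, e.cut_le_of_mem_sideVertices ?_, by nlinarith [f.t_pos]⟩
    rw [← e.split.sideVertices_comm]
    exact f.a_mem_sideVertices
  have hlt := lt_apply_of_mem_interior e.cut_ne_zero e.triangle_subset_cut hze
  exact (hsub (f.mem_convexHull_oax_of_mem_triangle hzf (e.split.map_v ▸ hG))).not_gt hlt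

lemma interior_triangle_inter_interior_triangle :
    interior e.triangle ∩ interior f.triangle = ∅ := by
  by_contra hne
  obtain ⟨z, hz⟩ := nonempty_iff_ne_empty.2 hne
  have hU : IsOpen (interior e.triangle ∩ interior f.triangle) :=
    isOpen_interior.inter isOpen_interior
  obtain ⟨y, hy, hGy⟩ : ∃ y ∈ interior e.triangle ∩ interior f.triangle, G y ≠ G u := by
    by_contra! hall
    exact (apply_lt_of_mem_interior e.map_ne_zero (fun y hy => (hall y hy).le)
      (hU.interior_eq.symm ▸ hz)).ne (hall z hz)
  rcases hGy.lt_or_gt with hlt | hgt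
  · refine false_of_mem_interior_triangle_of_mem_triangle e.neg f.neg
      (e.neg_triangle ▸ hy.1) (f.neg_triangle ▸ interior_subset hy.2) ?_
    simpa using hlt.le
  · exact false_of_mem_interior_triangle_of_mem_triangle e f hy.1 (interior_subset hy.2) hgt.le

end Side

lemma SplitLine.sidePolygon_comm {P : Finset Pt} {G : Pt →ₗ[ℝ] ℝ} {u v : Pt}
    (S : SplitLine P G u v) : sidePolygon P G v u = sidePolygon P G u v := by
  rw [sidePolygon, S.sideVertices_comm, sidePolygon]

lemma SplitLine.exists_convexDecomp_card_four {P : Finset Pt} {G : Pt →ₗ[ℝ] ℝ} {u v : Pt}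
    (S : SplitLine P G u v) : ∃ D : Finset (Set Pt), IsConvexDecomp P D ∧ D.card = 4 := by
  obtain ⟨e⟩ := S.nonempty_exitEdge
  obtain ⟨f⟩ := S.symm.nonempty_exitEdge
  have hf := f.interior_triangle_inter_interior_sidePolygon
  have hf' := f.neg.interior_triangle_inter_interior_sidePolygon
  have he' := e.neg.interior_triangle_inter_interior_sidePolygon
  rw [S.sidePolygon_comm] at hf
  rw [S.neg.sidePolygon_comm, f.neg_triangle] at hf'
  rw [e.neg_triangle] at he'
  refine exists_convexDecomp_of_emptyPolygons e.isEmptyPolygonOn_triangle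
    f.isEmptyPolygonOn_triangle e.isEmptyPolygonOn_sidePolygon e.neg.isEmptyPolygonOn_sidePolygon
    (interior_triangle_inter_interior_triangle e f)
    e.interior_triangle_inter_interior_sidePolygon he' hf hf'
    (interior_inter_interior_eq_empty_of_halfPlanes (c := -G u) (neg_ne_zero.2 e.map_ne_zero)
      (fun z hz => by simpa using S.sidePolygon_subset hz) S.neg.sidePolygon_subset) ?_
  intro z hz
  rcases le_total (G u) (G z) with hG | hG
  · rcases mem_triangle_or_mem_triangle_or_mem_sidePolygon e f hz hG with h | h | h
    exacts [.inl (.inl (.inl h)), .inl (.inl (.inr h)), .inl (.inr h)]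
  · rcases mem_triangle_or_mem_triangle_or_mem_sidePolygon e.neg f.neg hz (by simpa using hG)
      with h | h | h
    · exact .inl (.inl (.inl (e.neg_triangle ▸ h)))
    · exact .inl (.inl (.inr (f.neg_triangle ▸ h)))
    · exact .inr h

/-- If `P` is in general position with exactly two interior points, then `P` admits a
convex decomposition with exactly 4 polygons, so `u(P) ≤ 4 ≤ (4/3)·2 + (1/3)|B(P)| + 1`. -/
theorem two_interior_points (P : Finset Pt) (hgp : GenPos P)
    (hi : (intI P).card = 2) :
    (∃ D : Finset (Set Pt), IsConvexDecomp P D ∧ D.card = 4) ∧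
    uMin P ≤ 4 ∧ (4 : ℝ) ≤ 4 / 3 * 2 + 1 / 3 * (hullB P).card + 1 := by
  obtain ⟨u, v, huv, hI⟩ := Finset.card_eq_two.1 hi
  have S : SplitLine P (wedge (v - u)) u v := .of_intI_eq hgp huv hI
  obtain ⟨D, hD, hcard⟩ := S.exists_convexDecomp_card_four
  have hB : (1 : ℝ) ≤ (hullB P).card := by
    exact_mod_cast (hullB_nonempty ⟨u, S.u_mem⟩).card_pos
  exact ⟨⟨D, hD, hcard⟩, hcard ▸ Nat.sInf_le ⟨D, hD, rfl⟩, by linarith⟩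
end

section
/- Let P be a finite point set in general position in the plane such that (i) every triangle formed by three consecutive hull vertices of P contains a point of P in its interior, and (ii) for every edge q q⁺ of the convex hull of I(P), the open outer half-plane H(q) contains exactly one hull vertex of P. Then for every hull vertex p_j of P, the region CH(P) ∩ Int(A(p_j; q_j, p_{j−1})) contains no point of P, where q_j is the first interior point following p_{j−1} on the hull of P \ {p_j} and A(a; b, c) is the angular domain at a bounded by rays ab and ac containing segment bc. -/
/-! Take a functional `g` supporting `CH(P \ {p_j})` along its edge `p_{j-1} q_j`; since `q_j` is
not a hull vertex of `P`, `p_j` lies strictly above the line `g = g q_j`. Let `h` vanish on the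
line `p_j q_j` and be positive at `p_{j-1}`. A point `x ∈ P` in the open angle has `h x > h q_j` and
`g x ≤ g q_j`. Rotating the line `g = g q_j` about `q_j`, i.e. passing to `u = h + L g`, until it
meets a second interior point `q₁`, yields an edge `q_j q₁` of `CH(I(P))` whose outer half-plane
contains `p_{j-1}` and, besides, `x` if `L ≤ 0` or `p_j` if `L > 0`. By (ii), `x = p_{j-1}`, which
is not in the open angle. -/

open Module Set

section

variable {V : Type*} [AddCommGroup V] [Module ℝ V]

theorem collinear_of_forall_apply_eq [FiniteDimensional ℝ V] (hV : finrank ℝ V = 2)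
    {f : V →ₗ[ℝ] ℝ} (hf : f ≠ 0) {s : Set V} {c : ℝ} (hs : ∀ x ∈ s, f x = c) :
    Collinear ℝ s := by
  have hker : finrank ℝ (LinearMap.ker f) = 1 := by
    have := f.finrank_range_add_finrank_ker
    rw [LinearMap.range_eq_top.2 (LinearMap.surjective_iff_ne_zero.2 hf), finrank_top,
      finrank_self, hV] at this
    omega
  rw [collinear_iff_finrank_le_one, ← hker]
  refine Submodule.finrank_mono ?_
  rw [vectorSpan_def, Submodule.span_le]
  rintro _ ⟨a, ha, b, hb, rfl⟩
  simp [hs a ha, hs b hb]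

theorem exists_apply_eq_apply_lt_of_not_collinear {a b c : V}
    (h : ¬ Collinear ℝ ({a, b, c} : Set V)) : ∃ f : V →ₗ[ℝ] ℝ, f b = f a ∧ f a < f c := by
  have hc : c - a ∉ ℝ ∙ (b - a) := by
    rintro hc
    obtain ⟨t, ht⟩ := Submodule.mem_span_singleton.1 hc
    refine h ((collinear_iff_of_mem (p₀ := a) (by simp)).2 ⟨b - a, ?_⟩)
    simp only [mem_insert_iff, mem_singleton_iff, forall_eq_or_imp, forall_eq, vadd_eq_add]
    exact ⟨⟨0, by simp⟩, ⟨1, by simp⟩, ⟨t, by rw [ht]; abel⟩⟩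
  obtain ⟨f, hfc, hfb⟩ := Submodule.exists_dual_map_eq_bot_of_notMem hc inferInstance
  have hba : f (b - a) = 0 := by
    simpa [hfb] using
      Submodule.mem_map_of_mem (f := f) (Submodule.mem_span_singleton_self (b - a))
  rw [map_sub, sub_eq_zero] at hba
  rw [map_sub, sub_ne_zero] at hfc
  rcases hfc.lt_or_gt with hlt | hlt
  · exact ⟨-f, by simp [hba], by simpa using hlt⟩
  · exact ⟨f, hba, hlt⟩

end

section

variable {E : Type*} [NormedAddCommGroup E] [NormedSpace ℝ E]

theorem affineSpan_eq_top_of_not_collinear [FiniteDimensional ℝ E] (hE : finrank ℝ E = 2)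
    {s : Set E} (hs : ¬ Collinear ℝ s) : affineSpan ℝ s = ⊤ := by
  have hne : s.Nonempty := nonempty_iff_ne_empty.2 fun h => hs (h ▸ collinear_empty ℝ E)
  rw [AffineSubspace.affineSpan_eq_top_iff_vectorSpan_eq_top_of_nonempty ℝ E E hne]
  refine Submodule.eq_top_of_finrank_eq (le_antisymm (Submodule.finrank_le _) ?_)
  rw [collinear_iff_finrank_le_one] at hs
  omega

theorem apply_lt_of_mem_interior_s8 [FiniteDimensional ℝ E] {f : E →ₗ[ℝ] ℝ} (hf : f ≠ 0)
    {S : Set E} {c : ℝ} (hS : ∀ x ∈ S, f x ≤ c) {z : E} (hz : z ∈ interior S) : f z < c := by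
  set F := LinearMap.toContinuousLinearMap f
  have hF : F ≠ 0 := (LinearEquiv.map_ne_zero_iff _).2 hf
  have himage : F '' interior S ⊆ Iio c := by
    rw [← interior_Iic]
    exact interior_maximal (image_subset_iff.2 fun x hx => hS x (interior_subset hx))
      (F.isOpenMap_of_ne_zero hF _ isOpen_interior)
  exact himage ⟨z, hz, rfl⟩

theorem Convex.exists_forall_le_of_segment_subset_frontier {S : Set E} (hS : Convex ℝ S)
    (hint : (interior S).Nonempty) {a b : E} (ha : a ∈ S) (hb : b ∈ S)
    (hab : segment ℝ a b ⊆ frontier S) :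
    ∃ g : StrongDual ℝ E, g ≠ 0 ∧ g b = g a ∧ ∀ x ∈ S, g x ≤ g a := by
  have hm : midpoint ℝ a b ∉ interior S := (hab (midpoint_mem_segment a b)).2
  obtain ⟨g, hg0, hg⟩ := geometric_hahn_banach_of_nonempty_interior_point hS hm hint
  have hgm : g (midpoint ℝ a b) = (g a + g b) / 2 := by
    rw [midpoint_eq_smul_add, map_smul, map_add, smul_eq_mul]; norm_num; ring
  have hga := hg a ha
  have hgb := hg b hb
  refine ⟨g, hg0, by linarith, fun x hx => ?_⟩
  linarith [hg x hx]

end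

theorem Finset.mem_convexHull_filter_of_le {E : Type*} [AddCommGroup E] [Module ℝ E]
    {s : Finset E} {f : E →ₗ[ℝ] ℝ} {c : ℝ} (hle : ∀ y ∈ s, f y ≤ c) {x : E}
    (hx : x ∈ convexHull ℝ (s : Set E)) (hfx : c ≤ f x) :
    x ∈ convexHull ℝ (s.filter (fun y => f y = c) : Set E) := by
  classical
  obtain ⟨w, hw0, hw1, rfl⟩ := Finset.mem_convexHull'.1 hx
  have hslack : ∑ y ∈ s, w y * (c - f y) = 0 := by
    refine le_antisymm ?_
      (Finset.sum_nonneg fun y hy => mul_nonneg (hw0 y hy) (by linarith [hle y hy]))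
    simp only [map_sum, map_smul, smul_eq_mul] at hfx
    simp only [mul_sub, Finset.sum_sub_distrib, ← Finset.sum_mul, hw1]
    linarith
  have hsupp : ∀ y ∈ s, w y ≠ 0 → f y = c := fun y hy hwy => by
    have := (Finset.sum_eq_zero_iff_of_nonneg fun y hy =>
      mul_nonneg (hw0 y hy) (by linarith [hle y hy])).1 hslack y hy
    rcases mul_eq_zero.1 this with h | h
    · exact absurd h hwy
    · linarith
  refine Finset.mem_convexHull'.2 ⟨w, fun y hy => hw0 y (Finset.mem_filter.1 hy).1, ?_, ?_⟩
  · rwa [Finset.sum_filter_of_ne hsupp]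
  · exact Finset.sum_filter_of_ne fun y hy hne => hsupp y hy fun h => hne (by simp [h])

theorem exists_add_smul_le_of_lt {E : Type*} [AddCommGroup E] [Module ℝ E]
    (g h : E →ₗ[ℝ] ℝ) {q : E} {s : Finset E} (hs : s.Nonempty) (hlt : ∀ r ∈ s, g r < g q) :
    ∃ L : ℝ, ∃ q₁ ∈ s,
      (h + L • g) q₁ = (h + L • g) q ∧ ∀ r ∈ s, (h + L • g) r ≤ (h + L • g) q := by
  obtain ⟨q₁, hq₁, hmax⟩ := s.exists_max_image (fun r => (h r - h q) / (g q - g r)) hs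
  refine ⟨(h q₁ - h q) / (g q - g q₁), q₁, hq₁, ?_, fun r hr => ?_⟩
  · have := sub_pos.2 (hlt q₁ hq₁)
    simp only [LinearMap.add_apply, LinearMap.smul_apply, smul_eq_mul]
    field_simp
    ring
  · have hmax := (div_le_iff₀ (sub_pos.2 (hlt r hr))).1 (hmax r hr)
    simp only [LinearMap.add_apply, LinearMap.smul_apply, smul_eq_mul]
    linarith

theorem finrank_pt : finrank ℝ Pt = 2 := by simp

theorem GenPos.mono {P Q : Finset Pt} (hP : GenPos P) (hQ : Q ⊆ P) : GenPos Q :=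
  fun p hp q hq r hr => hP p (hQ hp) q (hQ hq) r (hQ hr)

theorem GenPos.eq_or_eq_of_apply_eq {P : Finset Pt} (hP : GenPos P) {f : Pt →ₗ[ℝ] ℝ}
    (hf : f ≠ 0) {a b y : Pt} (ha : a ∈ P) (hb : b ∈ P) (hy : y ∈ P) (hab : a ≠ b)
    (hfb : f b = f a) (hfy : f y = f a) : y = a ∨ y = b := by
  by_contra! hy'
  refine hP a ha b hb y hy hab (Ne.symm hy'.2) (Ne.symm hy'.1)
    (collinear_of_forall_apply_eq finrank_pt hf (c := f a) ?_)
  simp [hfb, hfy]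

theorem GenPos.mem_hullB_of_forall_le {P : Finset Pt} (hP : GenPos P) {f : Pt →ₗ[ℝ] ℝ}
    (hf : f ≠ 0) {p q : Pt} (hp : p ∈ P) (hq : q ∈ P) (hpq : p ≠ q)
    (hle : ∀ y ∈ P, f y ≤ f q) (hfp : f p = f q) : q ∈ hullB P := by
  classical
  refine Finset.mem_filter.2 ⟨hq, fun hmem => ?_⟩
  rw [← Finset.coe_erase] at hmem
  have hface := Finset.mem_convexHull_filter_of_le
    (fun y hy => hle y (Finset.mem_of_mem_erase hy)) hmem le_rfl
  have hlevel : ((P.erase q).filter (fun y => f y = f q) : Set Pt) ⊆ {p} := by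
    intro y hy
    obtain ⟨hyq, hyP⟩ := Finset.mem_erase.1 (Finset.mem_filter.1 hy).1
    exact (hP.eq_or_eq_of_apply_eq hf hq hp hyP hpq.symm hfp
      (Finset.mem_filter.1 hy).2).resolve_left hyq
  have := convexHull_mono hlevel hface
  rw [convexHull_singleton] at this
  exact hpq this.symm

theorem GenPos.isHullEdge_of_forall_le {P : Finset Pt} (hP : GenPos P) {f : Pt →ₗ[ℝ] ℝ}
    (hf : f ≠ 0) {p q : Pt} (hp : p ∈ P) (hq : q ∈ P) (hpq : p ≠ q)
    (hle : ∀ y ∈ P, f y ≤ f p) (hfq : f q = f p) : IsHullEdge P p q := by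
  refine ⟨hP.mem_hullB_of_forall_le hf hq hp hpq.symm hle hfq,
    hP.mem_hullB_of_forall_le hf hp hq hpq (hfq ▸ hle) hfq.symm, hpq, fun z hz => ?_⟩
  have hCH : ∀ x ∈ convexHull ℝ (P : Set Pt), f x ≤ f p := fun x hx =>
    convexHull_min (fun y hy => hle y hy) (convex_halfSpace_le f.isLinear (f p)) hx
  have hfz : f z = f p := (convex_hyperplane f.isLinear (f p)).segment_subset rfl hfq hz
  rw [(P.finite_toSet.isClosed_convexHull (𝕜 := ℝ)).frontier_eq]
  exact ⟨segment_subset_convexHull hp hq hz,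
    fun hint => (apply_lt_of_mem_interior_s8 hf hCH hint).ne hfz⟩

theorem angDom_subset_setOf_le {a b c : Pt} {k : Pt →ₗ[ℝ] ℝ} (hb : k a ≤ k b)
    (hc : k a ≤ k c) : angDom a b c ⊆ {x | k a ≤ k x} := by
  rintro _ ⟨s, t, hs, ht, rfl⟩
  simp only [mem_ofPred_eq, map_add, map_smul, map_sub, smul_eq_mul]
  nlinarith

theorem lt_apply_of_mem_interior_angDom {a b c z : Pt} {k : Pt →ₗ[ℝ] ℝ} (hk : k ≠ 0)
    (hb : k a ≤ k b) (hc : k a ≤ k c) (hz : z ∈ interior (angDom a b c)) : k a < k z :=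
  neg_lt_neg_iff.1 <| apply_lt_of_mem_interior_s8 (f := -k) (neg_ne_zero.2 hk)
    (fun x hx => by simpa using angDom_subset_setOf_le hb hc hx) hz

theorem right_notMem_interior_angDom {a b c : Pt} (h : ¬ Collinear ℝ ({a, b, c} : Set Pt)) :
    c ∉ interior (angDom a b c) := by
  rw [Set.pair_comm] at h
  obtain ⟨k, hkc, hkb⟩ := exists_apply_eq_apply_lt_of_not_collinear h
  have hk : k ≠ 0 := by rintro rfl; simp at hkb
  exact fun hc => (lt_apply_of_mem_interior_angDom hk hkb.le hkc.ge hc).ne' hkc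

theorem ne_of_mem_intI_of_mem_hullB {P : Finset Pt} {r p : Pt} (hr : r ∈ intI P)
    (hp : p ∈ hullB P) : r ≠ p :=
  fun h => (Finset.mem_sdiff.1 hr).2 (h ▸ hp)

theorem hullB_subset (P : Finset Pt) : hullB P ⊆ P := by
  classical
  exact Finset.filter_subset _ _

theorem OuterOne.eq_of_lt_apply {P : Finset Pt} (ho : OuterOne P) (hP : GenPos P)
    {u : Pt →ₗ[ℝ] ℝ} {q q₁ a b : Pt} (hq : q ∈ intI P) (hq₁ : q₁ ∈ intI P) (hqq₁ : q ≠ q₁)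
    (hle : ∀ r ∈ intI P, u r ≤ u q) (huq₁ : u q₁ = u q)
    (ha : a ∈ hullB P) (hb : b ∈ hullB P) (hua : u q < u a) (hub : u q < u b) : a = b := by
  have hu : u ≠ 0 := by rintro rfl; simp at hua
  have hedge := (hP.mono Finset.sdiff_subset).isHullEdge_of_forall_le hu hq hq₁ hqq₁ hle huq₁
  have hone := ho q q₁ {y | u q < u y} hedge ⟨u, hu, huq₁.symm, rfl, hle⟩
  by_contra hab
  have : 1 < ((hullB P : Set Pt) ∩ {y | u q < u y}).ncard :=
    (Set.one_lt_ncard ((hullB P).finite_toSet.inter_of_left _)).2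
      ⟨a, ⟨ha, hua⟩, b, ⟨hb, hub⟩, hab⟩
  omega

theorem exists_supporting_of_isHullEdge_erase {P : Finset Pt} (hP : GenPos P) {pjm pj qj : Pt}
    (hqj : qj ∈ intI P) (hedge : IsHullEdge (P.erase pj) pjm qj)
    (hnc : ¬ Collinear ℝ ((P.erase pj : Finset Pt) : Set Pt)) :
    ∃ g : Pt →ₗ[ℝ] ℝ, g pjm = g qj ∧ (∀ y ∈ P.erase pj, g y ≤ g qj) ∧ g qj < g pj := by
  obtain ⟨hpjm, hqj', hpjm_qj, hseg⟩ := hedge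
  have hpjm' := hullB_subset _ hpjm
  have hqj'' := hullB_subset _ hqj'
  have hint : (interior (convexHull ℝ ((P.erase pj : Finset Pt) : Set Pt))).Nonempty := by
    rw [(convex_convexHull ℝ _).interior_nonempty_iff_affineSpan_eq_top, affineSpan_convexHull]
    exact affineSpan_eq_top_of_not_collinear finrank_pt hnc
  obtain ⟨g, hg0, hg_qj, hg_le⟩ :=
    (convex_convexHull ℝ _).exists_forall_le_of_segment_subset_frontier hint
      (subset_convexHull ℝ _ hpjm') (subset_convexHull ℝ _ hqj'') hseg
  have hg0' : (g : Pt →ₗ[ℝ] ℝ) ≠ 0 := fun h => hg0 (ContinuousLinearMap.coe_injective h)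
  have hg_le' : ∀ y ∈ P.erase pj, g y ≤ g qj := fun y hy =>
    hg_qj ▸ hg_le y (subset_convexHull ℝ _ hy)
  refine ⟨g, hg_qj.symm, hg_le', lt_of_not_ge fun hle => ?_⟩
  refine (Finset.mem_sdiff.1 hqj).2 (hP.mem_hullB_of_forall_le hg0'
    (Finset.mem_of_mem_erase hpjm') (Finset.mem_of_mem_erase hqj'') hpjm_qj (fun y hy => ?_)
    hg_qj.symm)
  rcases eq_or_ne y pj with rfl | hy_pj
  · exact hle
  · exact hg_le' y (Finset.mem_erase.2 ⟨hy_pj, hy⟩)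

theorem OuterOne.eq_of_supporting {P : Finset Pt} (ho : OuterOne P) (hP : GenPos P)
    {g h : Pt →ₗ[ℝ] ℝ} {pjm pj qj x : Pt} (hqj : qj ∈ intI P)
    (hIne : ((intI P).erase qj).Nonempty) (hpjm : pjm ∈ hullB P) (hpj : pj ∈ hullB P)
    (hpj_pjm : pj ≠ pjm) (hg_le : ∀ y ∈ P.erase pj, g y ≤ g qj) (hg_pjm : g pjm = g qj)
    (hg_pj : g qj < g pj) (hh_pj : h pj = h qj) (hh_pjm : h qj < h pjm)
    (hx : x ∈ P.erase pj) (hh_x : h qj < h x) : x = pjm := by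
  have hg0 : g ≠ 0 := by rintro rfl; simp at hg_pj
  have hlt : ∀ r ∈ (intI P).erase qj, g r < g qj := by
    intro r hr
    obtain ⟨hr_qj, hrI⟩ := Finset.mem_erase.1 hr
    have hrP := (Finset.mem_sdiff.1 hrI).1
    refine (hg_le r (Finset.mem_erase.2 ⟨ne_of_mem_intI_of_mem_hullB hrI hpj, hrP⟩)).lt_of_ne
      fun hgr => ?_
    rcases hP.eq_or_eq_of_apply_eq hg0 (hullB_subset _ hpjm) (Finset.mem_sdiff.1 hqj).1 hrP
      (ne_of_mem_intI_of_mem_hullB hqj hpjm).symm hg_pjm.symm (hgr.trans hg_pjm.symm) with h | h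
    · exact ne_of_mem_intI_of_mem_hullB hrI hpjm h
    · exact hr_qj h
  obtain ⟨L, q₁, hq₁, huq₁, hu_le⟩ := exists_add_smul_le_of_lt g h hIne hlt
  set u := h + L • g
  have hu : ∀ y, u y = h y + L * g y := fun y => rfl
  have hu_le' : ∀ r ∈ intI P, u r ≤ u qj := fun r hr => by
    rcases eq_or_ne r qj with rfl | hr_qj
    · exact le_rfl
    · exact hu_le r (Finset.mem_erase.2 ⟨hr_qj, hr⟩)
  obtain ⟨hq₁_qj, hq₁I⟩ := Finset.mem_erase.1 hq₁
  have key : ∀ {a b : Pt}, a ∈ hullB P → b ∈ hullB P → u qj < u a → u qj < u b → a = b :=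
    ho.eq_of_lt_apply hP hqj hq₁I hq₁_qj.symm hu_le' huq₁
  have hu_pjm : u qj < u pjm := by rw [hu, hu, hg_pjm]; linarith
  rcases le_or_gt L 0 with hL | hL
  · have hg_x := hg_le x hx
    have hu_x : u qj < u x := by rw [hu, hu]; nlinarith
    have hxB : x ∈ hullB P := by
      by_contra hxB
      exact (hu_le' x (Finset.mem_sdiff.2 ⟨Finset.mem_of_mem_erase hx, hxB⟩)).not_gt hu_x
    exact key hxB hpjm hu_x hu_pjm
  · exact absurd (key hpj hpjm (by rw [hu, hu, hh_pj]; nlinarith) hu_pjm) hpj_pjm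

theorem lemma_dj_general (P : Finset Pt) (hgp : GenPos P)
    (hi : 3 ≤ (intI P).card) (ho : OuterOne P)
    (pjm pj qj : Pt) (hedge : IsHullEdge P pjm pj)
    (hqj : qj ∈ intI P) (hqjedge : IsHullEdge (P.erase pj) pjm qj) :
    convexHull ℝ (P : Set Pt) ∩ interior (angDom pj qj pjm) ∩ (P : Set Pt) = ∅ := by
  obtain ⟨hpjmB, hpjB, hpjm_pj, -⟩ := hedge
  have hpjm_qj : pjm ≠ qj := hqjedge.2.2.1
  have hqj_pj := ne_of_mem_intI_of_mem_hullB hqj hpjB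
  have hqjP := (Finset.mem_sdiff.1 hqj).1
  have hpjP := hullB_subset _ hpjB
  have hpjmP := hullB_subset _ hpjmB
  obtain ⟨r, hr⟩ : ((intI P).erase qj).Nonempty := by
    rw [← Finset.card_pos, Finset.card_erase_of_mem hqj]; omega
  obtain ⟨hr_qj, hrI⟩ := Finset.mem_erase.1 hr
  have hrP := (Finset.mem_sdiff.1 hrI).1
  have hnc : ¬ Collinear ℝ ((P.erase pj : Finset Pt) : Set Pt) := fun hcol =>
    hgp pjm hpjmP qj hqjP r hrP hpjm_qj (Ne.symm hr_qj)
      (ne_of_mem_intI_of_mem_hullB hrI hpjmB).symm (hcol.subset (by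
        simp [Set.insert_subset_iff, hpjm_pj, hqj_pj, ne_of_mem_intI_of_mem_hullB hrI hpjB,
          hpjmP, hqjP, hrP]))
  obtain ⟨g, hg_pjm, hg_le, hg_pj⟩ :=
    exists_supporting_of_isHullEdge_erase hgp hqj hqjedge hnc
  obtain ⟨h, hh_pj, hh_pjm⟩ := exists_apply_eq_apply_lt_of_not_collinear
    (hgp qj hqjP pj hpjP pjm hpjmP hqj_pj hpjm_pj.symm hpjm_qj.symm)
  have hh0 : h ≠ 0 := by rintro rfl; simp at hh_pjm
  rw [Set.eq_empty_iff_forall_notMem]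
  rintro x ⟨⟨-, hxA⟩, hxP⟩
  have hh_x : h pj < h x := lt_apply_of_mem_interior_angDom hh0 hh_pj.le (hh_pj ▸ hh_pjm.le) hxA
  have hx : x ∈ P.erase pj := Finset.mem_erase.2 ⟨by rintro rfl; exact hh_x.false, hxP⟩
  have hx_pjm := ho.eq_of_supporting hgp hqj ⟨r, hr⟩ hpjmB hpjB hpjm_pj.symm hg_le hg_pjm hg_pj
    hh_pj hh_pjm hx (hh_pj ▸ hh_x)
  exact right_notMem_interior_angDom (hgp pj hpjP qj hqjP pjm hpjmP hqj_pj.symm hpjm_qj.symm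
    hpjm_pj.symm) (hx_pjm ▸ hxA)

/-- **Lemma 1 of the paper.** Under the hypotheses of Case 4, for every hull vertex `p_j`
of `P` with hull predecessor `p_{j-1}`, and `q_j` the first interior point following
`p_{j-1}` on the hull of `P \ {p_j}`, the region
`CH(P) ∩ Int(A(p_j; q_j, p_{j-1}))` contains no point of `P`. -/
theorem lemma_dj (P : Finset Pt) (hgp : GenPos P)
    (hi : 3 ≤ (intI P).card) (htf : TripleFilled P) (ho : OuterOne P)
    (pjm pj qj : Pt) (hedge : IsHullEdge P pjm pj)
    (hqj : qj ∈ intI P) (hqjedge : IsHullEdge (P.erase pj) pjm qj) :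
    convexHull ℝ (P : Set Pt) ∩ interior (angDom pj qj pjm) ∩ (P : Set Pt) = ∅ :=
  lemma_dj_general P hgp hi ho pjm pj qj hedge hqj hqjedge
end
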